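/- arXiv:math/0011249 — 2 statements merged into one kernel-verified Lean document; each statement's English description precedes it below -/
import Mathlib

section
/- Let p be a prime and g a positive integer, and let W be a 2-dimensional linear subspace of (Z/pZ)^{2g} on which the standard symplectic form (.,.)_p is not identically zero (there exist x, y ∈ W with (x, y)_p ≠ 0). Then there exist primitive vectors a_1, a_2 ∈ Z^{2g} with (a_1, a_2) = 1 for the standard symplectic form on Z^{2g}, such that the reductions of a_1 and a_2 modulo p both lie in W. -/
/-!
Rescaling, `W` contains `x, y` with `(x, y)_p = 1`. A nonzero vector mod `p` lifts to a primitive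
integral vector `a₁`: lift it, and shift one coordinate by a multiple of `p` so that it becomes
coprime to another coordinate that is nonzero mod `p`. The Gram matrix of the form is a signed
permutation matrix, so by Bézout the primitive `a₁` pairs to `1` with some integral `w`. If `b`
lifts `y`, then `(a₁, b) ≡ 1 mod p`, and `a₂ = b - ((a₁, b) - 1) w` still lifts `y` while
`(a₁, a₂) = 1`, which also forces `a₂` to be primitive.
-/

open Finset

/-- The matrix of the standard symplectic form: `(e_i, e_j) = δ_{i+j, 2g+1}` for `i < j`
(with `1`-based indices; here indices are `0`-based, so the condition reads `i + j = 2g - 1`). -/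
def sympJ (g : ℕ) (R : Type*) [Ring R] : Matrix (Fin (2 * g)) (Fin (2 * g)) R :=
  fun i j =>
    if (i : ℕ) < (j : ℕ) ∧ (i : ℕ) + (j : ℕ) = 2 * g - 1 then 1
    else if (j : ℕ) < (i : ℕ) ∧ (i : ℕ) + (j : ℕ) = 2 * g - 1 then -1
    else 0

/-- The standard symplectic (bilinear antisymmetric) form on `R^{2g}`. -/
def symp (g : ℕ) (R : Type*) [CommRing R] (x y : Fin (2 * g) → R) : R :=
  ∑ i, ∑ j, x i * sympJ g R i j * y j

open Matrix

section SympMatrix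

variable {g : ℕ} {R : Type*}

theorem sympJ_eq_zero_of_ne_rev [Ring R] {i j : Fin (2 * g)} (hj : j ≠ i.rev) :
    sympJ g R i j = 0 := by
  have hij : (i : ℕ) + j ≠ 2 * g - 1 := fun h ↦ hj (Fin.ext (by simp [Fin.val_rev]; omega))
  simp [sympJ, hij]

theorem sympJ_rev_mul_self [Ring R] (i : Fin (2 * g)) :
    sympJ g R i i.rev * sympJ g R i i.rev = 1 := by
  have hsum : (i : ℕ) + i.rev = 2 * g - 1 := by simp [Fin.val_rev]; omega
  simp only [sympJ]
  rcases lt_or_gt_of_ne (show (i : ℕ) ≠ i.rev by simp [Fin.val_rev]; omega) with h | h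
  · rw [if_pos ⟨h, hsum⟩, one_mul]
  · rw [if_neg fun h' ↦ h'.1.not_gt h, if_pos ⟨h, hsum⟩, neg_one_mul, neg_neg]

theorem sympJ_mulVec_apply [Ring R] (y : Fin (2 * g) → R) (i : Fin (2 * g)) :
    (sympJ g R *ᵥ y) i = sympJ g R i i.rev * y i.rev :=
  Fintype.sum_eq_single (f := fun j ↦ sympJ g R i j * y j) _ fun j hj ↦ by
    simp [sympJ_eq_zero_of_ne_rev hj]

theorem sympJ_mulVec_surjective [Ring R] : Function.Surjective (sympJ g R *ᵥ ·) := by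
  intro c
  refine ⟨fun k ↦ sympJ g R k.rev k * c k.rev, funext fun i ↦ ?_⟩
  simp only [sympJ_mulVec_apply, Fin.rev_rev, ← mul_assoc, sympJ_rev_mul_self, one_mul]

theorem symp_eq_dotProduct_mulVec [CommRing R] (x y : Fin (2 * g) → R) :
    symp g R x y = x ⬝ᵥ (sympJ g R *ᵥ y) := by
  simp [symp, dotProduct, mulVec, Finset.mul_sum, mul_assoc]

theorem map_symp {S : Type*} [CommRing R] [CommRing S] (f : R →+* S) (x y : Fin (2 * g) → R) :
    f (symp g R x y) = symp g S (fun i ↦ f (x i)) (fun i ↦ f (y i)) := by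
  have hJ : ∀ i j, f (sympJ g R i j) = sympJ g S i j := fun i j ↦ by
    simp only [sympJ, apply_ite f, map_one, map_neg, map_zero]
  simp [symp, hJ]

end SympMatrix

theorem Finset.gcd_eq_one_of_dvd_one {ι R : Type*} [CommMonoidWithZero R] [NormalizedGCDMonoid R]
    {s : Finset ι} {f : ι → R} (h : s.gcd f ∣ 1) : s.gcd f = 1 := by
  rw [← Finset.normalize_gcd, normalize_eq_one]
  exact isUnit_of_dvd_one h

theorem gcd_dvd_dotProduct {ι R : Type*} [Fintype ι] [CommSemiring R] [NormalizedGCDMonoid R]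
    (v w : ι → R) : univ.gcd v ∣ v ⬝ᵥ w :=
  Finset.dvd_sum fun _ hi ↦ (Finset.gcd_dvd hi).mul_right _

section Primitive

variable {g : ℕ} {R : Type*} [CommRing R] [NormalizedGCDMonoid R]

theorem gcd_eq_one_right_of_symp_eq_one {a b : Fin (2 * g) → R} (h : symp g R a b = 1) :
    univ.gcd b = 1 := by
  refine Finset.gcd_eq_one_of_dvd_one (h ▸ ?_)
  rw [symp_eq_dotProduct_mulVec, dotProduct_mulVec, dotProduct_comm]
  exact gcd_dvd_dotProduct _ _

theorem exists_symp_eq_gcd [IsBezout R] (a : Fin (2 * g) → R) :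
    ∃ w, symp g R a w = univ.gcd a := by
  obtain ⟨c, hc⟩ := Finset.gcd_eq_sum_mul univ a
  obtain ⟨w, hw : sympJ g R *ᵥ w = c⟩ := sympJ_mulVec_surjective c
  exact ⟨w, by rw [symp_eq_dotProduct_mulVec, hw, hc]; rfl⟩

end Primitive

theorem exists_gcd_eq_one_intCast_eq {ι : Type*} [Fintype ι] [DecidableEq ι] [Nontrivial ι]
    {p : ℕ} (hp : p.Prime) {x : ι → ZMod p} (hx : x ≠ 0) :
    ∃ a : ι → ℤ, univ.gcd a = 1 ∧ (fun k ↦ (a k : ZMod p)) = x := by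
  obtain ⟨i, hi⟩ := Function.ne_iff.mp hx
  obtain ⟨j, hji⟩ := exists_ne i
  set L : ι → ℤ := fun k ↦ (x k).cast
  have hL : ∀ k, (L k : ZMod p) = x k := fun k ↦ ZMod.intCast_zmod_cast (x k)
  have hcop : IsCoprime (p : ℤ) (L i) := by
    rw [(Nat.prime_iff_prime_int.mp hp).coprime_iff_not_dvd, ← ZMod.intCast_zmod_eq_zero_iff_dvd,
      hL]
    exact hi
  obtain ⟨u, v, huv⟩ := hcop
  -- As `u p ≡ 1 [ZMOD L i]`, adding `p u (1 - L j)` to `L j` makes it `≡ 1 [ZMOD L i]`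
  -- without changing it mod `p`; then the entries at `i` and `j` are coprime.
  set a := Function.update L j (L j + p * (u * (1 - L j)))
  refine ⟨a, Finset.gcd_eq_one_of_dvd_one ?_, funext fun k ↦ ?_⟩
  · have hdi : univ.gcd a ∣ L i := by
      simpa [a, hji.symm] using Finset.gcd_dvd (mem_univ i) (f := a)
    have hdj : univ.gcd a ∣ L j + p * (u * (1 - L j)) := by
      simpa [a] using Finset.gcd_dvd (mem_univ j) (f := a)
    have hone : L j + p * (u * (1 - L j)) + v * (1 - L j) * L i = 1 := by
      linear_combination (1 - L j) * huv
    rw [← hone]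
    exact dvd_add hdj (hdi.mul_left _)
  · rcases eq_or_ne k j with rfl | hk
    · simp [a, hL]
    · simp [a, hk, hL]

theorem exists_intCast_eq_symp_eq_one {g N : ℕ} {a : Fin (2 * g) → ℤ} (ha : univ.gcd a = 1)
    {y : Fin (2 * g) → ZMod N} (hy : symp g (ZMod N) (fun k ↦ (a k : ZMod N)) y = 1) :
    ∃ b : Fin (2 * g) → ℤ, symp g ℤ a b = 1 ∧ (fun k ↦ (b k : ZMod N)) = y := by
  set b₀ : Fin (2 * g) → ℤ := fun k ↦ (y k).cast
  have hb₀ : (fun k ↦ (b₀ k : ZMod N)) = y := funext fun k ↦ ZMod.intCast_zmod_cast (y k)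
  have hS : ((symp g ℤ a b₀ : ℤ) : ZMod N) = 1 := by
    simpa [hb₀, hy] using map_symp (Int.castRingHom (ZMod N)) a b₀
  obtain ⟨w, hw⟩ := exists_symp_eq_gcd a
  -- `w` pairs to `1` with `a`, and the correction `((a, b₀) - 1) • w` vanishes mod `N`.
  refine ⟨b₀ - (symp g ℤ a b₀ - 1) • w, ?_, ?_⟩
  · rw [symp_eq_dotProduct_mulVec, mulVec_sub, mulVec_smul, dotProduct_sub, dotProduct_smul,
      ← symp_eq_dotProduct_mulVec, ← symp_eq_dotProduct_mulVec, hw, ha, smul_eq_mul]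
    ring
  · ext k
    simp [hS, ← hb₀]

theorem exists_symp_eq_one {K : Type*} [Field K] {g : ℕ} {W : Submodule K (Fin (2 * g) → K)}
    (h : ∃ x ∈ W, ∃ y ∈ W, symp g K x y ≠ 0) : ∃ x ∈ W, ∃ y ∈ W, symp g K x y = 1 := by
  obtain ⟨x, hx, y, hy, hxy⟩ := h
  refine ⟨x, hx, (symp g K x y)⁻¹ • y, W.smul_mem _ hy, ?_⟩
  rw [symp_eq_dotProduct_mulVec, mulVec_smul, dotProduct_smul, ← symp_eq_dotProduct_mulVec,
    smul_eq_mul, inv_mul_cancel₀ hxy]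

theorem hyperbolic_pair_lifts_general (p : ℕ) (hp : p.Prime) (g : ℕ) (hg : 0 < g)
    (W : Submodule (ZMod p) (Fin (2 * g) → ZMod p))
    (hnt : ∃ x ∈ W, ∃ y ∈ W, symp g (ZMod p) x y ≠ 0) :
    ∃ a₁ a₂ : Fin (2 * g) → ℤ,
      Finset.univ.gcd a₁ = 1 ∧ Finset.univ.gcd a₂ = 1 ∧
      symp g ℤ a₁ a₂ = 1 ∧
      (fun i => ((a₁ i : ℤ) : ZMod p)) ∈ W ∧ (fun i => ((a₂ i : ℤ) : ZMod p)) ∈ W := by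
  have : Fact p.Prime := ⟨hp⟩
  have : Nontrivial (Fin (2 * g)) := Fin.nontrivial_iff_two_le.mpr (by omega)
  obtain ⟨x, hxW, y, hyW, hxy⟩ := exists_symp_eq_one hnt
  have hx : x ≠ 0 := by
    rintro rfl
    simp [symp_eq_dotProduct_mulVec] at hxy
  obtain ⟨a₁, ha₁, rfl⟩ := exists_gcd_eq_one_intCast_eq hp hx
  obtain ⟨a₂, ha₁₂, rfl⟩ := exists_intCast_eq_symp_eq_one ha₁ hxy
  exact ⟨a₁, a₂, ha₁, gcd_eq_one_right_of_symp_eq_one ha₁₂, ha₁₂, hxW, hyW⟩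

/-- a `2`-dimensional subspace of `(ℤ/pℤ)^{2g}` on which the standard
symplectic form is not identically zero contains the reductions of two primitive
integral vectors pairing to `1`. -/
theorem hyperbolic_pair_lifts (p : ℕ) (hp : p.Prime) (g : ℕ) (hg : 0 < g)
    (W : Submodule (ZMod p) (Fin (2 * g) → ZMod p))
    (hW : Module.finrank (ZMod p) W = 2)
    (hnt : ∃ x ∈ W, ∃ y ∈ W, symp g (ZMod p) x y ≠ 0) :
    ∃ a₁ a₂ : Fin (2 * g) → ℤ,
      Finset.univ.gcd a₁ = 1 ∧ Finset.univ.gcd a₂ = 1 ∧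
      symp g ℤ a₁ a₂ = 1 ∧
      (fun i => ((a₁ i : ℤ) : ZMod p)) ∈ W ∧ (fun i => ((a₂ i : ℤ) : ZMod p)) ∈ W :=
  hyperbolic_pair_lifts_general p hp g hg W hnt
end

section
/- Let p be a prime, g a positive integer, and G a linear subspace of (Z/pZ)^{2g}. Then there exist integers r ≥ 0 and k with 0 ≤ k ≤ r, and vectors a_1, ..., a_r, b_1, ..., b_k ∈ Z^{2g} that are linearly independent over Z and satisfy, for the standard symplectic form on Z^{2g}, (a_i, a_j) = 0, (b_i, b_j) = 0, and (a_i, b_j) = δ_{ij}, such that the reductions modulo p of a_1, ..., a_r, b_1, ..., b_k generate G. -/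
open Finset

/-!
Lift a partial symplectic basis of `G` one pair at a time, keeping over `ℤ` a whole system of
pairs `(x i, y i)` with `(x i, x j) = (y i, y j) = 0` and `(x i, y j) = δ_ij`: such a system is
linearly independent, and `w ↦ w + ∑ (y i, w) x i - ∑ (x i, w) y i` projects onto its symplectic
complement. A vector of `G` not yet generated is lifted, projected and divided by the gcd of its
coordinates; since the form is unimodular, the primitive vector `v` so obtained pairs to `1` with
some `z` in the complement. If `v mod p` is orthogonal to `G`, the pair `(v, z)` is added and only
`v` counts as a generator. Otherwise the projected lift of some `u ∈ G` with `(v, u) ≡ 1 mod p`,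
corrected by a multiple of `p` of `z`, is a partner of `v` that reduces into `G`.
-/

open Function

theorem exists_equiv_range_castAdd {ι : Type*} [Fintype ι] (K : ι → Prop) :
    ∃ (k m : ℕ) (σ : Fin (k + m) ≃ ι), Set.range (σ ∘ Fin.castAdd m) = {i | K i} := by
  classical
  refine ⟨_, _, finSumFinEquiv.symm.trans ((Equiv.sumCongr (Fintype.equivFin {i // K i}).symm
    (Fintype.equivFin {i // ¬K i}).symm).trans (Equiv.sumCompl K)), ?_⟩
  ext i
  simp only [Set.mem_range, comp_apply, Equiv.trans_apply, finSumFinEquiv_symm_apply_castAdd,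
    Equiv.sumCongr_apply, Sum.map_inl, Equiv.sumCompl_apply_inl, Set.mem_ofPred_eq]
  exact ⟨fun ⟨j, hj⟩ => hj ▸ (_ : {i // K i}).2,
    fun hi => ⟨_, congrArg Subtype.val ((Fintype.equivFin _).symm_apply_apply ⟨i, hi⟩)⟩⟩

section SymplecticForm

open Matrix

variable (g : ℕ) (R : Type*) [CommRing R]

def sympForm : LinearMap.BilinForm R (Fin (2 * g) → R) := Matrix.toBilin' (sympJ g R)

variable {g R}

theorem symp_eq_sympForm (x y : Fin (2 * g) → R) : symp g R x y = sympForm g R x y :=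
  (Matrix.toBilin'_apply _ _ _).symm

theorem sympJ_transpose : (sympJ g R)ᵀ = -sympJ g R := by
  ext i j
  simp only [Matrix.transpose_apply, Matrix.neg_apply, sympJ]
  split_ifs <;> first | omega | simp

theorem sympJ_mul_self : sympJ g R * sympJ g R = -1 := by
  ext i k
  rw [Matrix.mul_apply, Finset.sum_eq_single ⟨2 * g - 1 - i, by omega⟩]
  · simp only [sympJ, Matrix.neg_apply, Matrix.one_apply, Fin.ext_iff]
    split_ifs <;> first | omega | simp
  · intro j _ hj
    have hj' : (j : ℕ) ≠ 2 * g - 1 - i := fun h => hj (Fin.ext h)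
    simp only [sympJ]
    split_ifs <;> first | omega | simp
  · simp

theorem map_sympForm {S : Type*} [CommRing S] (f : R →+* S) (x y : Fin (2 * g) → R) :
    sympForm g S (f ∘ x) (f ∘ y) = f (sympForm g R x y) := by
  have hJ : ∀ i j, sympJ g S i j = f (sympJ g R i j) := fun i j => by
    unfold sympJ; split_ifs <;> simp
  simp [sympForm, Matrix.toBilin'_apply, hJ, map_sum]

theorem sympForm_swap (x y : Fin (2 * g) → R) : sympForm g R y x = -sympForm g R x y := by
  simp only [sympForm, Matrix.toBilin'_apply']
  rw [Matrix.dotProduct_mulVec, ← Matrix.mulVec_transpose, sympJ_transpose, Matrix.neg_mulVec,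
    neg_dotProduct, dotProduct_comm]

theorem sympForm_isAlt : (sympForm g ℤ).IsAlt := fun x => by
  have := sympForm_swap x x
  omega

theorem sympForm_neg_mulVec (v c : Fin (2 * g) → R) :
    sympForm g R v (-(sympJ g R *ᵥ c)) = v ⬝ᵥ c := by
  rw [sympForm, Matrix.toBilin'_apply', Matrix.mulVec_neg, Matrix.mulVec_mulVec, sympJ_mul_self,
    Matrix.neg_mulVec, neg_neg, Matrix.one_mulVec]

theorem exists_sympForm_eq_one {v : Fin (2 * g) → ℤ} (hv : Finset.univ.gcd v = 1) :
    ∃ z, sympForm g ℤ v z = 1 := by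
  obtain ⟨c, hc⟩ := Finset.univ.gcd_eq_sum_mul v
  exact ⟨_, (sympForm_neg_mulVec v c).trans (hc.symm.trans hv)⟩

end SymplecticForm

section SymplecticSystem

variable {R M ι κ : Type*} [CommRing R] [AddCommGroup M] [Module R M]

structure IsSymplecticSystem (B : LinearMap.BilinForm R M) (x y : ι → M) : Prop where
  isotropic_left : ∀ i j, B (x i) (x j) = 0
  isotropic_right : ∀ i j, B (y i) (y j) = 0
  apply_self : ∀ i, B (x i) (y i) = 1
  apply_of_ne : Pairwise fun i j => B (x i) (y j) = 0

def symplecticProj [Fintype ι] (B : LinearMap.BilinForm R M) (x y : ι → M) (w : M) : M :=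
  w + ∑ i, B (y i) w • x i - ∑ i, B (x i) w • y i

def symplecticComplement (B : LinearMap.BilinForm R M) (x y : ι → M) : Submodule R M :=
  ⨅ i, LinearMap.ker (B (x i)) ⊓ LinearMap.ker (B (y i))

variable {B : LinearMap.BilinForm R M} {x y : ι → M}

theorem mem_symplecticComplement {v : M} :
    v ∈ symplecticComplement B x y ↔ ∀ i, B (x i) v = 0 ∧ B (y i) v = 0 := by
  simp [symplecticComplement]

theorem apply_symplecticProj_of_mem [Fintype ι] (hB : B.IsAlt) {u : M}
    (hu : u ∈ symplecticComplement B x y) (w : M) : B u (symplecticProj B x y w) = B u w := by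
  rw [mem_symplecticComplement] at hu
  simp [symplecticProj, map_sum, fun i => hB.isRefl _ _ (hu i).1, fun i => hB.isRefl _ _ (hu i).2]

namespace IsSymplecticSystem

variable (h : IsSymplecticSystem B x y)
include h

theorem comp {f : κ → ι} (hf : Injective f) : IsSymplecticSystem B (x ∘ f) (y ∘ f) :=
  ⟨fun _ _ => h.isotropic_left _ _, fun _ _ => h.isotropic_right _ _, fun _ => h.apply_self _,
    fun _ _ hij => h.apply_of_ne (hf.ne hij)⟩

theorem linearIndependent_sumElim (hB : B.IsAlt) {f : κ → ι} (hf : Injective f) :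
    LinearIndependent R (Sum.elim x (y ∘ f)) := by
  have hyx : ∀ i j, -B (y i) (x j) = B (x j) (y i) := fun i j => hB.neg_eq (y i) (x j)
  refine .of_pairwise_dual_eq_zero_one _ (Sum.elim (fun i => -B (y i)) (fun j => B (x (f j))))
    ?_ ?_
  · rintro (i | i) (j | j) hij
    · simpa [hyx] using h.apply_of_ne fun e => hij (congrArg Sum.inl e.symm)
    · simp [h.isotropic_right]
    · simp [h.isotropic_left]
    · simpa using h.apply_of_ne (hf.ne fun e => hij (congrArg Sum.inr e))
  · rintro (i | i)
    · simpa [hyx] using h.apply_self i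
    · simpa using h.apply_self (f i)

theorem symplecticProj_mem [Fintype ι] (hB : B.IsAlt) (w : M) :
    symplecticProj B x y w ∈ symplecticComplement B x y := by
  classical
  have hxy : ∀ i j, B (x j) (y i) = if j = i then 1 else 0 := fun i j => by
    split_ifs with hji
    · rw [hji, h.apply_self]
    · exact h.apply_of_ne hji
  have hyx : ∀ i j, B (y j) (x i) = -if i = j then 1 else 0 := fun i j => by
    rw [← hB.neg_eq (x i), hxy]
  simp [mem_symplecticComplement, symplecticProj, map_sum, h.isotropic_left, h.isotropic_right,
    hxy, hyx]

theorem option (hB : B.IsAlt) {v u : M} (hv : v ∈ symplecticComplement B x y)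
    (hu : u ∈ symplecticComplement B x y) (hvu : B v u = 1) :
    IsSymplecticSystem B (fun o : Option ι => o.elim v x) (fun o : Option ι => o.elim u y) := by
  rw [mem_symplecticComplement] at hv hu
  refine ⟨?_, ?_, ?_, ?_⟩
  · rintro (_ | i) (_ | j)
    exacts [hB v, hB.isRefl _ _ (hv j).1, (hv i).1, h.isotropic_left i j]
  · rintro (_ | i) (_ | j)
    exacts [hB u, hB.isRefl _ _ (hu j).2, (hu i).2, h.isotropic_right i j]
  · rintro (_ | i)
    exacts [hvu, h.apply_self i]
  · rintro (_ | i) (_ | j) hij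
    exacts [absurd rfl hij, hB.isRefl _ _ (hv j).2, (hu i).1,
      h.apply_of_ne fun e => hij (congrArg some e)]

end IsSymplecticSystem

end SymplecticSystem

section Lift

variable {p g : ℕ} {ι κ : Type*}

def reduceMod (p : ℕ) {κ : Type*} : (κ → ℤ) →ₗ[ℤ] κ → ZMod p :=
  (Int.castAddHom (ZMod p)).toIntLinearMap.compLeft κ

theorem reduceMod_apply (v : κ → ℤ) (t : κ) : reduceMod p v t = v t := rfl

theorem reduceMod_surjective [NeZero p] : Surjective (reduceMod p : (κ → ℤ) → κ → ZMod p) :=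
  fun w => ⟨fun t => (w t).cast, funext fun t => ZMod.intCast_zmod_cast (w t)⟩

theorem reduceMod_smul (c : ℤ) (v : κ → ℤ) :
    reduceMod p (c • v) = (c : ZMod p) • reduceMod p v := by
  ext; simp [reduceMod_apply]

theorem sympForm_reduceMod (v w : Fin (2 * g) → ℤ) :
    sympForm g (ZMod p) (reduceMod p v) (reduceMod p w) = sympForm g ℤ v w :=
  map_sympForm (Int.castRingHom (ZMod p)) v w

def liftSpan (p : ℕ) (K : ι → Prop) (x y : ι → κ → ℤ) : Submodule (ZMod p) (κ → ZMod p) :=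
  Submodule.span (ZMod p) (Set.range (reduceMod p ∘ x) ∪ reduceMod p ∘ y '' {i | K i})

theorem liftSpan_lt_option {K : ι → Prop} {x y : ι → κ → ℤ} (c : Prop) {v u : κ → ℤ}
    (hv : reduceMod p v ∉ liftSpan p K x y) :
    liftSpan p K x y <
      liftSpan p (fun o : Option ι => o.elim c K) (fun o => o.elim v x) (fun o => o.elim u y) := by
  refine SetLike.lt_iff_le_and_exists.mpr
    ⟨Submodule.span_mono ?_, _, Submodule.subset_span (Or.inl ⟨none, rfl⟩), hv⟩
  rintro _ (⟨i, rfl⟩ | ⟨i, hi, rfl⟩)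
  exacts [Or.inl ⟨some i, rfl⟩, Or.inr ⟨some i, hi, rfl⟩]

theorem liftSpan_le_ker_sympForm {K : ι → Prop} {x y : ι → Fin (2 * g) → ℤ} {v : Fin (2 * g) → ℤ}
    (hv : v ∈ symplecticComplement (sympForm g ℤ) x y) :
    liftSpan p K x y ≤ LinearMap.ker (sympForm g (ZMod p) (reduceMod p v)) := by
  rw [mem_symplecticComplement] at hv
  rw [liftSpan, Submodule.span_le]
  rintro _ (⟨i, rfl⟩ | ⟨i, -, rfl⟩) <;>
    simp [sympForm_reduceMod, sympForm_isAlt.isRefl _ _ (hv i).1,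
      sympForm_isAlt.isRefl _ _ (hv i).2]

theorem exists_primitive_of_reduceMod_mem_of_not_mem [Fact p.Prime] [Fintype κ]
    {G S : Submodule (ZMod p) (κ → ZMod p)} {v : κ → ℤ} (hG : reduceMod p v ∈ G)
    (hS : reduceMod p v ∉ S) :
    ∃ (d : ℤ) (v' : κ → ℤ), d ≠ 0 ∧ v = d • v' ∧ Finset.univ.gcd v' = 1 ∧
      reduceMod p v' ∈ G ∧ reduceMod p v' ∉ S := by
  have hv0 : reduceMod p v ≠ 0 := fun h0 => hS (h0 ▸ S.zero_mem)
  obtain ⟨t, -⟩ := ne_iff.mp hv0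
  obtain ⟨v', hv', hgcd⟩ := Finset.univ.extract_gcd v ⟨t, Finset.mem_univ t⟩
  set d := Finset.univ.gcd v
  have hvd : v = d • v' := funext fun t => hv' t (Finset.mem_univ t)
  have hd : (d : ZMod p) ≠ 0 := fun hd => hv0 (by rw [hvd, reduceMod_smul, hd, zero_smul])
  have hv'v : reduceMod p v' = (d : ZMod p)⁻¹ • reduceMod p v := by
    rw [hvd, reduceMod_smul, inv_smul_smul₀ hd]
  refine ⟨d, v', fun h0 => hd (by rw [h0, Int.cast_zero]), hvd, hgcd, hv'v ▸ G.smul_mem _ hG,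
    fun hS' => hS ?_⟩
  rw [hvd, reduceMod_smul]
  exact S.smul_mem _ hS'

variable (G : Submodule (ZMod p) (Fin (2 * g) → ZMod p))

/-- Pairs with `K i` lift hyperbolic pairs of `G`. For the others only `x i` is a generator, and it
reduces into the radical of `G`; `y i` is only needed to project away from `x i` over `ℤ`. -/
structure IsAdapted (K : ι → Prop) (x y : ι → Fin (2 * g) → ℤ) : Prop
    extends IsSymplecticSystem (sympForm g ℤ) x y where
  reduceMod_left_mem : ∀ i, reduceMod p (x i) ∈ G
  reduceMod_right_mem : ∀ i, K i → reduceMod p (y i) ∈ G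
  sympForm_reduceMod_left : ∀ i, ¬K i → ∀ w ∈ G, sympForm g (ZMod p) (reduceMod p (x i)) w = 0

namespace IsAdapted

variable {G} {K : ι → Prop} {x y : ι → Fin (2 * g) → ℤ} (h : IsAdapted G K x y)
include h

theorem liftSpan_le : liftSpan p K x y ≤ G := by
  rw [liftSpan, Submodule.span_le]
  rintro _ (⟨i, rfl⟩ | ⟨i, hi, rfl⟩)
  exacts [h.reduceMod_left_mem i, h.reduceMod_right_mem i hi]

theorem reduceMod_symplecticProj_sub_mem [Fintype ι] {w : Fin (2 * g) → ℤ}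
    (hw : reduceMod p w ∈ G) :
    reduceMod p (symplecticProj (sympForm g ℤ) x y w) - reduceMod p w ∈ liftSpan p K x y := by
  rw [symplecticProj, map_sub, map_add, add_sub_assoc, add_sub_cancel_left, map_sum, map_sum]
  refine sub_mem (sum_mem fun i _ => ?_) (sum_mem fun i _ => ?_) <;> rw [reduceMod_smul]
  · exact Submodule.smul_mem _ _ (Submodule.subset_span (Or.inl ⟨i, rfl⟩))
  by_cases hi : K i
  · exact Submodule.smul_mem _ _ (Submodule.subset_span (Or.inr ⟨i, hi, rfl⟩))
  · rw [← sympForm_reduceMod, h.sympForm_reduceMod_left i hi _ hw, zero_smul]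
    exact zero_mem _

theorem option {v u : Fin (2 * g) → ℤ} (hv : v ∈ symplecticComplement (sympForm g ℤ) x y)
    (hu : u ∈ symplecticComplement (sympForm g ℤ) x y) (hvu : sympForm g ℤ v u = 1)
    (hvG : reduceMod p v ∈ G) (c : Prop) (hc : c → reduceMod p u ∈ G)
    (hnc : ¬c → ∀ w ∈ G, sympForm g (ZMod p) (reduceMod p v) w = 0) :
    IsAdapted G (fun o : Option ι => o.elim c K) (fun o => o.elim v x) (fun o => o.elim u y) where
  toIsSymplecticSystem := h.toIsSymplecticSystem.option sympForm_isAlt hv hu hvu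
  reduceMod_left_mem := by
    rintro (_ | i)
    exacts [hvG, h.reduceMod_left_mem i]
  reduceMod_right_mem := by
    rintro (_ | i)
    exacts [hc, h.reduceMod_right_mem i]
  sympForm_reduceMod_left := by
    rintro (_ | i)
    exacts [hnc, h.sympForm_reduceMod_left i]

theorem exists_primitive_mem_symplecticComplement [Fact p.Prime] [Fintype ι]
    {w : Fin (2 * g) → ZMod p} (hwG : w ∈ G) (hwS : w ∉ liftSpan p K x y) :
    ∃ v ∈ symplecticComplement (sympForm g ℤ) x y, reduceMod p v ∈ G ∧
      reduceMod p v ∉ liftSpan p K x y ∧ Finset.univ.gcd v = 1 := by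
  obtain ⟨w, rfl⟩ := reduceMod_surjective w
  have hw := h.reduceMod_symplecticProj_sub_mem hwG
  obtain ⟨d, v, hd, hvd, hgcd, hvG, hvS⟩ := exists_primitive_of_reduceMod_mem_of_not_mem
    (by simpa using G.add_mem (h.liftSpan_le hw) hwG) (fun hS => hwS (by simpa using sub_mem hS hw))
  have hproj := h.symplecticProj_mem sympForm_isAlt w
  simp only [hvd, mem_symplecticComplement, map_smul, smul_eq_mul, mul_eq_zero, hd,
    false_or] at hproj
  exact ⟨v, mem_symplecticComplement.mpr hproj, hvG, hvS, hgcd⟩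

theorem exists_partner_mem [Fact p.Prime] [Fintype ι] {v z : Fin (2 * g) → ℤ}
    (hv : v ∈ symplecticComplement (sympForm g ℤ) x y)
    (hz : z ∈ symplecticComplement (sympForm g ℤ) x y) (hvz : sympForm g ℤ v z = 1)
    {u : Fin (2 * g) → ZMod p} (huG : u ∈ G) (hvu : sympForm g (ZMod p) (reduceMod p v) u = 1) :
    ∃ u' ∈ symplecticComplement (sympForm g ℤ) x y,
      sympForm g ℤ v u' = 1 ∧ reduceMod p u' ∈ G := by
  obtain ⟨u, rfl⟩ := reduceMod_surjective u
  set u₁ := symplecticProj (sympForm g ℤ) x y u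
  have hu₁ := h.reduceMod_symplecticProj_sub_mem huG
  have hvu₁ : ((sympForm g ℤ v u₁ : ℤ) : ZMod p) = 1 := by
    rw [← sympForm_reduceMod, ← sub_add_cancel (reduceMod p u₁) (reduceMod p u), map_add,
      LinearMap.mem_ker.mp (liftSpan_le_ker_sympForm hv hu₁), zero_add, hvu]
  set c := sympForm g ℤ v u₁ - 1
  have hc : (c : ZMod p) = 0 := by rw [Int.cast_sub, hvu₁, Int.cast_one, sub_self]
  refine ⟨u₁ - c • z, sub_mem (h.symplecticProj_mem sympForm_isAlt u) (Submodule.smul_mem _ _ hz),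
    ?_, ?_⟩
  · rw [map_sub, map_smul, hvz, smul_eq_mul, mul_one, sub_sub_cancel]
  · rw [map_sub, reduceMod_smul, hc, zero_smul, sub_zero]
    simpa using G.add_mem (h.liftSpan_le hu₁) huG

theorem exists_lt_liftSpan [Fact p.Prime] [Fintype ι] (hlt : liftSpan p K x y < G) :
    ∃ (K' : Option ι → Prop) (x' y' : Option ι → Fin (2 * g) → ℤ),
      IsAdapted G K' x' y' ∧ liftSpan p K x y < liftSpan p K' x' y' := by
  obtain ⟨w, hwG, hwS⟩ := SetLike.exists_of_lt hlt
  obtain ⟨v, hv, hvG, hvS, hgcd⟩ := h.exists_primitive_mem_symplecticComplement hwG hwS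
  obtain ⟨z, hvz⟩ := exists_sympForm_eq_one hgcd
  have hz := h.symplecticProj_mem sympForm_isAlt z
  rw [← apply_symplecticProj_of_mem sympForm_isAlt hv] at hvz
  by_cases hrad : ∀ w ∈ G, sympForm g (ZMod p) (reduceMod p v) w = 0
  · exact ⟨_, _, _, h.option hv hz hvz hvG False False.elim fun _ => hrad,
      liftSpan_lt_option False hvS⟩
  push Not at hrad
  obtain ⟨u, huG, hvu⟩ := hrad
  obtain ⟨u', hu', hvu', hu'G⟩ := h.exists_partner_mem hv hz hvz (G.smul_mem _ huG)
    (by rw [map_smul, smul_eq_mul, inv_mul_cancel₀ hvu])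
  exact ⟨_, _, _, h.option hv hu' hvu' hvG True (fun _ => hu'G) (absurd trivial),
    liftSpan_lt_option True hvS⟩

end IsAdapted

theorem exists_isAdapted_liftSpan_eq [Fact p.Prime] :
    ∃ (ι : Type) (_ : Fintype ι) (K : ι → Prop) (x y : ι → Fin (2 * g) → ℤ),
      IsAdapted G K x y ∧ liftSpan p K x y = G := by
  let S : Set (Submodule (ZMod p) (Fin (2 * g) → ZMod p)) :=
    {W | ∃ (ι : Type) (_ : Fintype ι) (K : ι → Prop) (x y : ι → Fin (2 * g) → ℤ),
      IsAdapted G K x y ∧ liftSpan p K x y = W}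
  have hempty : IsAdapted G (Empty.elim : Empty → Prop) Empty.elim Empty.elim :=
    ⟨⟨isEmptyElim, isEmptyElim, isEmptyElim, isEmptyElim⟩, isEmptyElim, isEmptyElim, isEmptyElim⟩
  obtain ⟨_, ⟨ι, hι, K, x, y, h, rfl⟩, hmax⟩ :=
    wellFounded_gt.has_min S ⟨_, Empty, inferInstance, _, _, _, hempty, rfl⟩
  refine ⟨ι, hι, K, x, y, h, h.liftSpan_le.eq_of_not_lt fun hlt => ?_⟩
  obtain ⟨K', x', y', h', hlt'⟩ := h.exists_lt_liftSpan hlt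
  exact hmax _ ⟨Option ι, inferInstance, K', x', y', h', rfl⟩ hlt'

end Lift

theorem subspace_generated_by_partial_symplectic_lift_general (p : ℕ) (hp : p.Prime)
    (g : ℕ)
    (G : Submodule (ZMod p) (Fin (2 * g) → ZMod p)) :
    ∃ (r k : ℕ), k ≤ r ∧
      ∃ (a : Fin r → Fin (2 * g) → ℤ) (b : Fin k → Fin (2 * g) → ℤ),
        LinearIndependent ℤ (Sum.elim a b) ∧
        (∀ i j, symp g ℤ (a i) (a j) = 0) ∧
        (∀ i j, symp g ℤ (b i) (b j) = 0) ∧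
        (∀ (i : Fin r) (j : Fin k),
          symp g ℤ (a i) (b j) = if (i : ℕ) = (j : ℕ) then 1 else 0) ∧
        Submodule.span (ZMod p)
          (Set.range fun i : Fin r ⊕ Fin k => fun t => ((Sum.elim a b i t : ℤ) : ZMod p)) = G := by
  have := Fact.mk hp
  obtain ⟨ι, _, K, x, y, h, hspan⟩ := exists_isAdapted_liftSpan_eq G
  obtain ⟨k, m, σ, hσ⟩ := exists_equiv_range_castAdd K
  have hsys := h.toIsSymplecticSystem.comp σ.injective
  refine ⟨k + m, k, k.le_add_right m, x ∘ σ, y ∘ σ ∘ Fin.castAdd m,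
    hsys.linearIndependent_sumElim sympForm_isAlt (Fin.castAdd_injective k m),
    fun i j => ?_, fun i j => ?_, fun i j => ?_, ?_⟩
  · rw [symp_eq_sympForm]
    exact hsys.isotropic_left i j
  · rw [symp_eq_sympForm]
    exact hsys.isotropic_right _ _
  · rw [symp_eq_sympForm]
    split_ifs with hij
    · rw [show i = Fin.castAdd m j from Fin.ext hij]
      exact hsys.apply_self _
    · exact hsys.apply_of_ne fun e => hij (congrArg Fin.val e)
  · rw [← hspan, liftSpan, ← hσ, ← Set.range_comp, ← σ.surjective.range_comp (reduceMod p ∘ x),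
      ← Set.Sum.elim_range]
    congr 2
    ext (i | i) t <;> rfl

/-- every subspace of `(ℤ/pℤ)^{2g}` is generated by the reductions of a
linearly independent partial symplectic family of integral vectors. -/
theorem subspace_generated_by_partial_symplectic_lift (p : ℕ) (hp : p.Prime)
    (g : ℕ) (hg : 0 < g)
    (G : Submodule (ZMod p) (Fin (2 * g) → ZMod p)) :
    ∃ (r k : ℕ), k ≤ r ∧
      ∃ (a : Fin r → Fin (2 * g) → ℤ) (b : Fin k → Fin (2 * g) → ℤ),
        LinearIndependent ℤ (Sum.elim a b) ∧
        (∀ i j, symp g ℤ (a i) (a j) = 0) ∧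
        (∀ i j, symp g ℤ (b i) (b j) = 0) ∧
        (∀ (i : Fin r) (j : Fin k),
          symp g ℤ (a i) (b j) = if (i : ℕ) = (j : ℕ) then 1 else 0) ∧
        Submodule.span (ZMod p)
          (Set.range fun i : Fin r ⊕ Fin k => fun t => ((Sum.elim a b i t : ℤ) : ZMod p)) = G :=
  subspace_generated_by_partial_symplectic_lift_general p hp g G
end
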